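/- arXiv:2412.03393 — 8 statements merged into one kernel-verified Lean document; each statement's English description precedes it below -/
import Mathlib

section
/- Let X = ℓ²(ℕ; ℝ) and let e₀ denote the first standard basis vector. There exists a map H : [0,1] × X → X, jointly continuous (for the norm topology on X), such that for every t ∈ [0,1] the map H(t, ·) : X → X is a surjective linear isometry, H(0, x) = x for all x, and H(1, x) = x − 2⟨x, e₀⟩ e₀ for all x. That is, in the infinite-dimensional Hilbert space ℓ² the identity and a reflection are connected by a jointly continuous isotopy of surjective linear isometries. -/
/-!
A skew-adjoint `J` with `J ^ 3 = -J` generates the unitary group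
`θ ↦ 1 + sin θ • J + (1 - cos θ) • J ^ 2` (Rodrigues' formula for `exp (θ J)`), whose value at `π`
is `1 + 2 • J ^ 2`. Take for `J` the signed coordinate swaps rotating the planes spanned by
`e (2k), e (2k+1)`, resp. by `e (2k+1), e (2k+2)` (the latter fixes `e 0`). At `π` the first
rotation is `-1` and the second is `1` on `e 0` and `-1` on `{e 0}ᗮ`, so the product of the two
rotations by `t π` joins the identity to the reflection across `{e 0}ᗮ`.
-/

open scoped RealInnerProductSpace lp ENNReal
open Real

section Rodrigues

variable {A : Type*} [Ring A] [Algebra ℝ A]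

noncomputable def rodrigues (J : A) (θ : ℝ) : A := 1 + sin θ • J + (1 - cos θ) • J ^ 2

variable {J : A}

theorem rodrigues_zero : rodrigues J 0 = 1 := by simp [rodrigues]

theorem rodrigues_pi : rodrigues J π = 1 + (2 : ℝ) • J ^ 2 := by norm_num [rodrigues]

theorem rodrigues_add (hJ : J ^ 3 = -J) (θ φ : ℝ) :
    rodrigues J (θ + φ) = rodrigues J θ * rodrigues J φ := by
  have h2 : J * J = J ^ 2 := (sq J).symm
  have h3 : J * J ^ 2 = -J := by rw [← pow_succ', hJ]
  have h3' : J ^ 2 * J = -J := by rw [← pow_succ, hJ]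
  have h4 : J ^ 2 * J ^ 2 = -J ^ 2 := by rw [← pow_add, pow_succ', hJ, mul_neg, ← sq]
  simp only [rodrigues, mul_add, add_mul, one_mul, mul_one, smul_mul_assoc, mul_smul_comm,
    h2, h3, h3', h4, sin_add, cos_add]
  module

theorem star_rodrigues [StarRing A] [StarModule ℝ A] (hJ : star J = -J) (θ : ℝ) :
    star (rodrigues J θ) = rodrigues J (-θ) := by
  simp [rodrigues, star_pow, hJ]

theorem rodrigues_mem_unitary [StarRing A] [StarModule ℝ A] (hJ : star J = -J)
    (hJ3 : J ^ 3 = -J) (θ : ℝ) : rodrigues J θ ∈ unitary A :=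
  Unitary.mem_iff.2
    ⟨by rw [star_rodrigues hJ, ← rodrigues_add hJ3, neg_add_cancel, rodrigues_zero],
      by rw [star_rodrigues hJ, ← rodrigues_add hJ3, add_neg_cancel, rodrigues_zero]⟩

theorem continuous_rodrigues [TopologicalSpace A] [ContinuousAdd A] [ContinuousSMul ℝ A] :
    Continuous (rodrigues J) := by
  unfold rodrigues; fun_prop

end Rodrigues

theorem Memℓp.comp_equiv {ι κ E : Type*} [NormedAddCommGroup E] {p : ℝ≥0∞} {f : κ → E}
    (hf : Memℓp f p) (hp : 0 < p.toReal) (σ : ι ≃ κ) : Memℓp (f ∘ σ) p :=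
  (memℓp_gen_iff hp).2 (σ.summable_iff.2 ((memℓp_gen_iff hp).1 hf))

section SignedPerm

variable {ι : Type*}

theorem norm_signType_mul_le (s : SignType) (a : ℝ) : ‖(s : ℝ) * a‖ ≤ ‖a‖ := by
  cases s <;> simp

noncomputable def signedPerm (σ : Equiv.Perm ι) (ε : ι → SignType) :
    ℓ²(ι, ℝ) →L[ℝ] ℓ²(ι, ℝ) :=
  LinearMap.mkContinuous
    { toFun := fun x => ⟨fun i => ε i * x (σ i),
        ((lp.memℓp x).comp_equiv (by norm_num) σ).mono' fun i => norm_signType_mul_le _ _⟩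
      map_add' := fun x y => lp.ext <| funext fun i => mul_add _ _ _
      map_smul' := fun c x => lp.ext <| funext fun i => mul_left_comm _ _ _ }
    1 fun x => by
      have hp : 0 < (2 : ℝ≥0∞).toReal := by norm_num
      have hg := σ.summable_iff.2 ((lp.memℓp x).summable hp)
      have hle : ∀ i,
          ‖(ε i : ℝ) * x (σ i)‖ ^ (2 : ℝ≥0∞).toReal ≤ ‖x (σ i)‖ ^ (2 : ℝ≥0∞).toReal :=
        fun i => by gcongr; exact norm_signType_mul_le _ _
      rw [one_mul]
      refine lp.norm_le_of_tsum_le hp (norm_nonneg x) ?_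
      rw [lp.norm_rpow_eq_tsum hp, ← σ.tsum_eq fun i => ‖x i‖ ^ (2 : ℝ≥0∞).toReal]
      exact (hg.of_nonneg_of_le (fun _ => by positivity) hle).tsum_mono hg hle

variable {σ : Equiv.Perm ι} {ε : ι → SignType}

theorem signedPerm_apply (x : ℓ²(ι, ℝ)) (i : ι) : signedPerm σ ε x i = ε i * x (σ i) := rfl

theorem star_signedPerm (hσ : Function.Involutive σ) (hε : ∀ i, ε (σ i) = -ε i) :
    star (signedPerm σ ε) = -signedPerm σ ε := by
  rw [ContinuousLinearMap.star_eq_adjoint, eq_comm, ContinuousLinearMap.eq_adjoint_iff]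
  intro x y
  simp only [neg_apply, inner_neg_left, lp.inner_eq_tsum, signedPerm_apply]
  rw [← σ.tsum_eq, ← tsum_neg]
  congr 1; funext i
  simp [hσ i, hε]
  ring

theorem signedPerm_sq_apply (hσ : Function.Involutive σ) (hε : ∀ i, ε (σ i) = -ε i)
    (x : ℓ²(ι, ℝ)) (i : ι) : (signedPerm σ ε ^ 2) x i = -((ε i : ℝ) ^ 2 * x i) := by
  rw [sq, mul_apply_eq_comp, signedPerm_apply, signedPerm_apply, hσ i, hε]
  push_cast; ring

theorem signedPerm_pow_three (hσ : Function.Involutive σ) (hε : ∀ i, ε (σ i) = -ε i) :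
    signedPerm σ ε ^ 3 = -signedPerm σ ε := by
  ext x i
  rw [pow_succ, mul_apply_eq_comp, signedPerm_sq_apply hσ hε,
    neg_apply, lp.coeFn_neg, Pi.neg_apply, signedPerm_apply]
  cases ε i <;> simp

end SignedPerm

section PairRotation

def pairSwap (a n : ℕ) : ℕ := if n < a then n else if (n - a) % 2 = 0 then n + 1 else n - 1

def pairSign (a n : ℕ) : SignType := if n < a then 0 else if (n - a) % 2 = 0 then -1 else 1

theorem pairSwap_involutive (a : ℕ) : Function.Involutive (pairSwap a) := by
  intro n; unfold pairSwap; split_ifs <;> omega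

theorem pairSign_pairSwap (a n : ℕ) : pairSign a (pairSwap a n) = -pairSign a n := by
  unfold pairSign pairSwap; split_ifs <;> first | rfl | omega

noncomputable def pairGenerator (a : ℕ) : ℓ²(ℕ, ℝ) →L[ℝ] ℓ²(ℕ, ℝ) :=
  signedPerm (pairSwap_involutive a).toPerm (pairSign a)

theorem star_pairGenerator (a : ℕ) : star (pairGenerator a) = -pairGenerator a :=
  star_signedPerm (pairSwap_involutive a) (pairSign_pairSwap a)

theorem pairGenerator_pow_three (a : ℕ) : pairGenerator a ^ 3 = -pairGenerator a :=
  signedPerm_pow_three (pairSwap_involutive a) (pairSign_pairSwap a)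

theorem rodrigues_pairGenerator_pi_apply (a : ℕ) (x : ℓ²(ℕ, ℝ)) (n : ℕ) :
    rodrigues (pairGenerator a) π x n = if n < a then x n else -x n := by
  rw [rodrigues_pi, add_apply, one_apply_eq_self, smul_apply, lp.coeFn_add, Pi.add_apply,
    lp.coeFn_smul, Pi.smul_apply, smul_eq_mul, pairGenerator,
    signedPerm_sq_apply (pairSwap_involutive a) (pairSign_pairSwap a)]
  unfold pairSign
  split_ifs <;> norm_num <;> ring

end PairRotation

noncomputable def reflectionIsotopy (t : ℝ) : ℓ²(ℕ, ℝ) →L[ℝ] ℓ²(ℕ, ℝ) :=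
  rodrigues (pairGenerator 0) (t * π) * rodrigues (pairGenerator 1) (t * π)

theorem reflectionIsotopy_mem_unitary (t : ℝ) :
    reflectionIsotopy t ∈ unitary (ℓ²(ℕ, ℝ) →L[ℝ] ℓ²(ℕ, ℝ)) :=
  Submonoid.mul_mem _
    (rodrigues_mem_unitary (star_pairGenerator 0) (pairGenerator_pow_three 0) _)
    (rodrigues_mem_unitary (star_pairGenerator 1) (pairGenerator_pow_three 1) _)

theorem continuous_reflectionIsotopy : Continuous reflectionIsotopy := by
  have h := (continuous_id.mul continuous_const : Continuous fun t : ℝ => t * π)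
  exact (continuous_rodrigues.comp h).mul (continuous_rodrigues.comp h)

theorem reflectionIsotopy_zero : reflectionIsotopy 0 = 1 := by
  simp [reflectionIsotopy, rodrigues_zero]

theorem reflectionIsotopy_one (x : ℓ²(ℕ, ℝ)) :
    reflectionIsotopy 1 x = x - (2 * ⟪x, lp.single 2 0 (1 : ℝ)⟫) • lp.single 2 0 (1 : ℝ) := by
  refine lp.ext (funext fun n => ?_)
  rw [reflectionIsotopy, one_mul, mul_apply_eq_comp, rodrigues_pairGenerator_pi_apply,
    rodrigues_pairGenerator_pi_apply, lp.coeFn_sub, Pi.sub_apply, lp.coeFn_smul, Pi.smul_apply,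
    lp.single_apply, lp.inner_single_right]
  rcases eq_or_ne n 0 with rfl | hn
  · simp; ring
  · simp [hn]

/-- **In `ℓ²(ℕ;ℝ)` the identity and a reflection are isotopic through surjective linear
isometries.** There is a jointly continuous map `H : [0,1] × ℓ² → ℓ²` such that each `H(t,·)` is a
surjective linear isometry, `H(0,·) = Id` and `H(1,·)` is the reflection
`x ↦ x − 2⟨x,e₀⟩e₀` across the hyperplane `{e₀}ᗮ`. -/
theorem ell2_isotopy_of_linear_isometries_from_id_to_reflection :
    ∃ H : ℝ → lp (fun _ : ℕ => ℝ) 2 → lp (fun _ : ℕ => ℝ) 2,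
      -- joint continuity on `[0,1] × X` (norm topology)
      ContinuousOn (fun p : ℝ × lp (fun _ : ℕ => ℝ) 2 => H p.1 p.2)
        (Set.Icc (0:ℝ) 1 ×ˢ Set.univ) ∧
      -- each `H t` is a surjective linear isometry
      (∀ t ∈ Set.Icc (0:ℝ) 1,
        (∀ x y, H t (x + y) = H t x + H t y) ∧
        (∀ (c : ℝ) (x), H t (c • x) = c • H t x) ∧
        (∀ x, ‖H t x‖ = ‖x‖) ∧
        Function.Surjective (H t)) ∧
      -- endpoints: the identity and the reflection across `{e₀}ᗮ`
      (∀ x, H 0 x = x) ∧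
      (∀ x, H 1 x = x - (2 * ⟪x, lp.single 2 0 (1:ℝ)⟫) • lp.single 2 0 (1:ℝ)) := by
  refine ⟨fun t => reflectionIsotopy t, ?_, fun t _ => ?_, fun x => ?_, reflectionIsotopy_one⟩
  · exact (continuous_reflectionIsotopy.comp continuous_fst).clm_apply continuous_snd
      |>.continuousOn
  · have hU := reflectionIsotopy_mem_unitary t
    exact ⟨map_add _, map_smul _, ContinuousLinearMap.norm_map_of_mem_unitary hU,
      (Unitary.linearIsometryEquiv ⟨_, hU⟩).surjective⟩
  · simp [reflectionIsotopy_zero]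
end

section
/- Let n ≥ 1 and let ψ₁, …, ψ_n ∈ L²((0,1); ℝ) be linearly independent. For s ∈ [0,1] define the symmetric matrix a(s) ∈ ℝ^{n×n} by a_{jk}(s) = ∫₀¹ sign(t − s) ψ_j(t) ψ_k(t) dt. Then a(0) is positive definite, a(1) is negative definite, the map s ↦ a(s) is continuous, and there exists s ∈ (0,1) and a nonzero vector v ∈ ℝⁿ with a(s) v = 0; that is, the Galerkin discretization matrix of the multiplication operator u ↦ sign(· − s) u is singular for some s, even though all these multiplication operators are invertible on L²((0,1);ℝ). -/
/-!
The matrix `a 0` is the Gram matrix of the `ψ j`, positive definite by linear independence, and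
`a 1 = -a 0`. Continuity of `s ↦ a s` is dominated convergence: `s ↦ sign (t - s)` jumps only at
`s = t`, a null set. Hence the least value of `v ⬝ᵥ a s *ᵥ v` on the unit sphere is continuous in
`s`, positive at `0` and negative at `1`, so it vanishes at some `s ∈ (0, 1)`. There `a s` is
positive semidefinite, and a unit vector attaining the value `0` lies in its kernel.
-/

open MeasureTheory Matrix

/-- The Lebesgue measure on the interval `(0,1)`. -/
noncomputable def mu01 : Measure ℝ := volume.restrict (Set.Ioo 0 1)

open Set

namespace Real

theorem measurable_sign : Measurable Real.sign :=
  Measurable.ite measurableSet_Iio measurable_const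
    (Measurable.ite measurableSet_Ioi measurable_const measurable_const)

theorem continuousAt_sign_of_ne_zero {r : ℝ} (hr : r ≠ 0) : ContinuousAt Real.sign r := by
  rcases hr.lt_or_gt with hr | hr
  · refine continuousAt_const.congr (f := fun _ => (-1 : ℝ)) ?_
    filter_upwards [Iio_mem_nhds hr] with x hx
    rw [sign_of_neg hx]
  · refine continuousAt_const.congr (f := fun _ => (1 : ℝ)) ?_
    filter_upwards [Ioi_mem_nhds hr] with x hx
    rw [sign_of_pos hx]

theorem abs_sign_le_one (r : ℝ) : |Real.sign r| ≤ 1 := by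
  rcases sign_apply_eq r with h | h | h <;> simp [h]

end Real

theorem continuous_integral_sign_sub_mul {μ : Measure ℝ} [NullSingletonClass μ] {f : ℝ → ℝ}
    (hf : Integrable f μ) : Continuous fun s => ∫ t, Real.sign (t - s) * f t ∂μ := by
  refine continuous_iff_continuousAt.2 fun s => continuousAt_of_dominated (bound := fun t => |f t|)
    (.of_forall fun _ => ?_) (.of_forall fun _ => .of_forall fun t => ?_) hf.abs ?_
  · exact (Real.measurable_sign.comp (measurable_id.sub_const _)).aestronglyMeasurable.mul hf.1
  · simpa [abs_mul] using mul_le_of_le_one_left (abs_nonneg (f t)) (Real.abs_sign_le_one _)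
  · filter_upwards [μ.ae_ne s] with t ht
    exact ((Real.continuousAt_sign_of_ne_zero (sub_ne_zero.2 ht)).comp
      (continuousAt_const.sub continuousAt_id)).mul continuousAt_const

theorem L2.real_inner_eq_integral_mul {α : Type*} [MeasurableSpace α] {μ : Measure α}
    (f g : Lp ℝ 2 μ) : inner ℝ f g = ∫ t, f t * g t ∂μ := by
  simp [L2.inner_def, mul_comm]

section QuadraticForm

variable {ι : Type*} [Fintype ι]

theorem Matrix.posSemidef_of_nonneg_on_sphere {M : Matrix ι ι ℝ} (hM : M.IsHermitian)
    (h : ∀ x ∈ Metric.sphere (0 : ι → ℝ) 1, 0 ≤ x ⬝ᵥ M *ᵥ x) : M.PosSemidef := by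
  refine .of_dotProduct_mulVec_nonneg hM fun x => ?_
  rw [star_trivial]
  rcases eq_or_ne x 0 with rfl | hx
  · simp
  have hscaled := h (‖x‖⁻¹ • x) (by simp [norm_smul, hx])
  rw [mulVec_smul, dotProduct_smul, smul_dotProduct, smul_eq_mul, smul_eq_mul,
    ← mul_assoc] at hscaled
  exact nonneg_of_mul_nonneg_right hscaled (by positivity)

theorem Matrix.exists_mulVec_eq_zero_of_posDef_of_negDef [Nonempty ι] {A : ℝ → Matrix ι ι ℝ}
    (hA : Continuous A) (hsym : ∀ s, (A s).IsHermitian)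
    (h0 : ∀ v : ι → ℝ, v ≠ 0 → 0 < v ⬝ᵥ A 0 *ᵥ v)
    (h1 : ∀ v : ι → ℝ, v ≠ 0 → v ⬝ᵥ A 1 *ᵥ v < 0) :
    ∃ s ∈ Ioo (0 : ℝ) 1, ∃ v : ι → ℝ, v ≠ 0 ∧ A s *ᵥ v = 0 := by
  set S := Metric.sphere (0 : ι → ℝ) 1
  have hS : IsCompact S := isCompact_sphere 0 1
  have hSne : S.Nonempty := NormedSpace.sphere_nonempty.2 zero_le_one
  have hS0 : ∀ v ∈ S, v ≠ 0 := fun v hv h => by simp [S, h] at hv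
  let q : ℝ → (ι → ℝ) → ℝ := fun s v => v ⬝ᵥ A s *ᵥ v
  have hq : Continuous ↿q :=
    continuous_snd.dotProduct ((hA.comp continuous_fst).matrix_mulVec continuous_snd)
  have hmin s : ∃ v ∈ S, sInf (q s '' S) = q s v ∧ ∀ w ∈ S, q s v ≤ q s w :=
    hS.exists_sInf_image_eq_and_le hSne (hq.comp (.prodMk_right s)).continuousOn
  have hg : Continuous fun s => sInf (q s '' S) := hS.continuous_sInf hq
  obtain ⟨v₀, hv₀, hg₀, -⟩ := hmin 0
  obtain ⟨v₁, hv₁, hg₁, -⟩ := hmin 1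
  obtain ⟨s, hs, hgs⟩ := intermediate_value_Ioo' zero_le_one hg.continuousOn
    ⟨hg₁.trans_lt (h1 v₁ (hS0 v₁ hv₁)), (h0 v₀ (hS0 v₀ hv₀)).trans_eq hg₀.symm⟩
  obtain ⟨v, hv, hgv, hle⟩ := hmin s
  have hqv : q s v = 0 := hgv ▸ hgs
  have hpsd : (A s).PosSemidef :=
    posSemidef_of_nonneg_on_sphere (hsym s) fun w hw => hqv ▸ hle w hw
  refine ⟨s, hs, v, hS0 v hv, (hpsd.dotProduct_mulVec_zero_iff v).1 ?_⟩
  rwa [star_trivial]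

end QuadraticForm

instance : NullSingletonClass mu01 := by
  unfold mu01
  infer_instance

theorem integral_sign_sub_mul_mu01_of_nonpos {s : ℝ} (hs : s ≤ 0) (f : ℝ → ℝ) :
    ∫ t, Real.sign (t - s) * f t ∂mu01 = ∫ t, f t ∂mu01 := by
  refine integral_congr_ae ?_
  filter_upwards [ae_restrict_mem measurableSet_Ioo] with t ht
  rw [Real.sign_of_pos (by linarith [ht.1]), one_mul]

theorem integral_sign_sub_mul_mu01_of_one_le {s : ℝ} (hs : 1 ≤ s) (f : ℝ → ℝ) :
    ∫ t, Real.sign (t - s) * f t ∂mu01 = -∫ t, f t ∂mu01 := by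
  rw [← integral_neg]
  refine integral_congr_ae ?_
  filter_upwards [ae_restrict_mem measurableSet_Ioo] with t ht
  rw [Real.sign_of_neg (by linarith [ht.2]), neg_one_mul]

/-- **Galerkin discretizations of the sign multiplication operators become singular.**
Let `ψ₁, …, ψ_n ∈ L²((0,1);ℝ)` be linearly independent and, for `s ∈ [0,1]`, let
`a(s)_{jk} = ∫₀¹ sign(t − s) ψ_j(t) ψ_k(t) dt`.  Then `a(0)` is positive definite, `a(1)` is
negative definite, `s ↦ a(s)` is continuous on `[0,1]`, and there is some `s ∈ (0,1)` for which
`a(s)` has nontrivial kernel, i.e. the Galerkin matrix is singular — even though every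
multiplication operator `u ↦ sign(· − s)·u` is invertible on `L²((0,1);ℝ)`. -/
theorem galerkin_matrix_of_sign_operator_is_singular_somewhere
    {n : ℕ} (hn : 1 ≤ n) (ψ : Fin n → Lp ℝ 2 mu01)
    (hψ : LinearIndependent ℝ ψ)
    (a : ℝ → Matrix (Fin n) (Fin n) ℝ)
    (ha : ∀ (s : ℝ) (j k : Fin n),
      a s j k = ∫ t, Real.sign (t - s) * (ψ j t * ψ k t) ∂mu01) :
    -- `a(0)` is positive definite
    (∀ v : Fin n → ℝ, v ≠ 0 → 0 < v ⬝ᵥ (a 0).mulVec v) ∧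
    -- `a(1)` is negative definite
    (∀ v : Fin n → ℝ, v ≠ 0 → v ⬝ᵥ (a 1).mulVec v < 0) ∧
    -- `s ↦ a(s)` is continuous on `[0,1]`
    ContinuousOn a (Set.Icc (0:ℝ) 1) ∧
    -- the Galerkin matrix is singular for some `s ∈ (0,1)`
    (∃ s ∈ Set.Ioo (0:ℝ) 1, ∃ v : Fin n → ℝ, v ≠ 0 ∧ (a s).mulVec v = 0) := by
  have hgram : a 0 = gram ℝ ψ := by
    ext j k
    rw [ha, integral_sign_sub_mul_mu01_of_nonpos le_rfl, gram_apply, L2.real_inner_eq_integral_mul]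
  have ha₁ : a 1 = -a 0 := by
    ext j k
    rw [neg_apply, ha, ha, integral_sign_sub_mul_mu01_of_one_le le_rfl,
      integral_sign_sub_mul_mu01_of_nonpos le_rfl]
  have hpos (v : Fin n → ℝ) (hv : v ≠ 0) : 0 < v ⬝ᵥ a 0 *ᵥ v := by
    simpa [hgram] using (posDef_gram_of_linearIndependent hψ).dotProduct_mulVec_pos hv
  have hneg (v : Fin n → ℝ) (hv : v ≠ 0) : v ⬝ᵥ a 1 *ᵥ v < 0 := by
    rw [ha₁, neg_mulVec, dotProduct_neg, neg_lt_zero]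
    exact hpos v hv
  have hcont : Continuous a := continuous_matrix fun j k => by
    simpa only [ha] using continuous_integral_sign_sub_mul (f := fun t => ψ j t * ψ k t)
      ((Lp.memLp (ψ j)).integrable_mul (Lp.memLp (ψ k)))
  have hsym (s : ℝ) : (a s).IsHermitian := IsHermitian.ext fun j k => by simp [ha, mul_comm]
  have : Nonempty (Fin n) := ⟨⟨0, hn⟩⟩
  exact ⟨hpos, hneg, hcont.continuousOn,
    exists_mulVec_eq_zero_of_posDef_of_negDef hcont hsym hpos hneg⟩
end

section
/- Let X be a real Hilbert space, let V ⊆ X be a finite-dimensional subspace with orthogonal projection P_V : X → X, and let F : X → X be continuously Fréchet differentiable and strongly monotone with constant α > 0. Then the map F_V := P_V ∘ F restricted to V, F_V : V → V, is strongly monotone with constant α, is a bijection of V onto V, and is a C¹-diffeomorphism of V (its inverse F_V⁻¹ : V → V is continuously differentiable). -/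
open Metric
open scoped RealInnerProductSpace

/-!
Compressing `F` to `V` preserves strong monotonicity, since `⟪P_V u, v⟫ = ⟪u, v⟫` for `v ∈ V`.
A strongly monotone map `f` with `α > 0` on a finite-dimensional space is antilipschitz, hence
injective and proper, so its range is closed. Differentiating the monotone function
`t ↦ ⟪f (x + t • h), h⟫ - α t ‖h‖²` shows that every derivative `f' x` is strongly monotone as
well, hence invertible; by the inverse function theorem `f` is an open map, so its range is also
open and `f` is onto. The inverse of the resulting homeomorphism is as smooth as `f` because the
derivatives of `f` are invertible everywhere.
-/

open Set Function

def IsStronglyMonotone {E : Type*} [NormedAddCommGroup E] [InnerProductSpace ℝ E]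
    (α : ℝ) (f : E → E) : Prop :=
  ∀ x y, α * ‖x - y‖ ^ 2 ≤ ⟪f x - f y, x - y⟫

namespace IsStronglyMonotone

variable {E : Type*} [NormedAddCommGroup E] [InnerProductSpace ℝ E] {α : ℝ} {f : E → E}

theorem orthogonalProjectionOnto_comp (hf : IsStronglyMonotone α f) (K : Submodule ℝ E)
    [K.HasOrthogonalProjection] :
    IsStronglyMonotone α (fun v : K => K.orthogonalProjectionOnto (f v)) := by
  intro x y
  have hinner : ⟪K.orthogonalProjectionOnto (f x) - K.orthogonalProjectionOnto (f y), x - y⟫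
      = ⟪f x - f y, (x : E) - y⟫ := by
    rw [inner_sub_left, K.inner_orthogonalProjectionOnto_eq_of_mem_right,
      K.inner_orthogonalProjectionOnto_eq_of_mem_right, ← inner_sub_left, K.coe_sub]
  rw [hinner, ← K.coe_sub, K.coe_norm]
  exact hf x y

theorem mul_norm_sub_le (hf : IsStronglyMonotone α f) (x y : E) :
    α * ‖x - y‖ ≤ ‖f x - f y‖ := by
  rcases (norm_nonneg (x - y)).eq_or_lt with hxy | hxy
  · simp [← hxy]
  refine le_of_mul_le_mul_right ?_ hxy
  calc α * ‖x - y‖ * ‖x - y‖ = α * ‖x - y‖ ^ 2 := by ring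
    _ ≤ ⟪f x - f y, x - y⟫ := hf x y
    _ ≤ ‖f x - f y‖ * ‖x - y‖ := real_inner_le_norm _ _

theorem antilipschitzWith (hf : IsStronglyMonotone α f) (hα : 0 < α) :
    AntilipschitzWith ⟨α⁻¹, (inv_pos.2 hα).le⟩ f := by
  refine AntilipschitzWith.of_le_mul_dist fun x y => ?_
  rw [dist_eq_norm, dist_eq_norm]
  change ‖x - y‖ ≤ α⁻¹ * ‖f x - f y‖
  rw [← div_eq_inv_mul, le_div_iff₀' hα]
  exact hf.mul_norm_sub_le x y

theorem injective (hf : IsStronglyMonotone α f) (hα : 0 < α) : Injective f :=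
  (hf.antilipschitzWith hα).injective

theorem monotone_inner_sub_mul (hf : IsStronglyMonotone α f) (x h : E) :
    Monotone fun t : ℝ => ⟪f (x + t • h), h⟫ - α * t * ‖h‖ ^ 2 := by
  refine monotone_iff_forall_lt.2 fun s t hst => ?_
  have hts : 0 < t - s := sub_pos.2 hst
  have key := hf (x + t • h) (x + s • h)
  rw [add_sub_add_left_eq_sub, ← sub_smul, norm_smul, real_inner_smul_right,
    Real.norm_of_nonneg hts.le, mul_pow, inner_sub_left] at key
  have : α * (t - s) * ‖h‖ ^ 2 ≤ ⟪f (x + t • h), h⟫ - ⟪f (x + s • h), h⟫ := by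
    refine le_of_mul_le_mul_left ?_ hts
    linarith
  linarith

theorem _root_.HasFDerivAt.isStronglyMonotone {f' : E →L[ℝ] E} {x : E}
    (hx : HasFDerivAt f f' x) (hf : IsStronglyMonotone α f) : IsStronglyMonotone α f' := by
  intro u v
  rw [← map_sub]
  set h := u - v
  have hline : HasDerivAt (fun t : ℝ => x + t • h) h 0 := by
    simpa using ((hasDerivAt_id (0 : ℝ)).smul_const h).const_add x
  have hcomp : HasDerivAt (fun t : ℝ => f (x + t • h)) (f' h) 0 := by
    have hx' : HasFDerivAt f f' (x + (0 : ℝ) • h) := by simpa using hx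
    exact hx'.comp_hasDerivAt 0 hline
  have hderiv : HasDerivAt (fun t : ℝ => ⟪f (x + t • h), h⟫ - α * t * ‖h‖ ^ 2)
      (⟪f' h, h⟫ - α * 1 * ‖h‖ ^ 2) 0 :=
    ((hcomp.inner ℝ (hasDerivAt_const 0 h)).congr_deriv (by simp)).sub
      (((hasDerivAt_id 0).const_mul α).mul_const _)
  linarith [hderiv.nonneg_of_monotone (hf.monotone_inner_sub_mul x h)]

variable [FiniteDimensional ℝ E] {n : WithTop ℕ∞}

theorem exists_hasStrictFDerivAt_equiv (hf : IsStronglyMonotone α f) (hα : 0 < α)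
    (hfn : ContDiff ℝ n f) (hn : n ≠ 0) :
    ∃ f' : E → E ≃L[ℝ] E, ∀ x, HasStrictFDerivAt f (f' x : E →L[ℝ] E) x := by
  have hinj (x : E) : Injective (fderiv ℝ f x) :=
    ((hfn.differentiable hn x).hasFDerivAt.isStronglyMonotone hf).injective hα
  exact ⟨fun x => (LinearEquiv.ofInjectiveEndo _ (hinj x)).toContinuousLinearEquiv,
    fun _ => hfn.hasStrictFDerivAt hn⟩

theorem surjective (hf : IsStronglyMonotone α f) (hα : 0 < α) (hfn : ContDiff ℝ n f)
    (hn : n ≠ 0) : Surjective f := by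
  obtain ⟨f', hf'⟩ := hf.exists_hasStrictFDerivAt_equiv hα hfn hn
  have hopen : IsOpen (range f) := (isOpenMap_of_hasStrictFDerivAt_equiv hf').isOpen_range
  have hproper : IsProperMap f := by
    rw [isProperMap_iff_tendsto_cocompact, ← cobounded_eq_cocompact]
    exact ⟨hfn.continuous, (hf.antilipschitzWith hα).tendsto_cobounded⟩
  rw [← range_eq_univ]
  exact IsClopen.eq_univ ⟨hproper.isClosedMap.isClosed_range, hopen⟩ (range_nonempty f)

theorem exists_contDiff_inverse (hf : IsStronglyMonotone α f) (hα : 0 < α)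
    (hfn : ContDiff ℝ n f) (hn : n ≠ 0) :
    ∃ g : E → E, LeftInverse g f ∧ RightInverse g f ∧ ContDiff ℝ n g := by
  obtain ⟨f', hf'⟩ := hf.exists_hasStrictFDerivAt_equiv hα hfn hn
  let e : E ≃ₜ E := (Equiv.ofBijective f ⟨hf.injective hα, hf.surjective hα hfn hn⟩)
    |>.toHomeomorphOfContinuousOpen hfn.continuous (isOpenMap_of_hasStrictFDerivAt_equiv hf')
  exact ⟨e.symm, e.symm_apply_apply, e.apply_symm_apply,
    e.contDiff_symm (fun x => (hf' x).hasFDerivAt) hfn⟩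

end IsStronglyMonotone

theorem strongly_monotone_projected_restriction_is_C1_diffeo_general
    {X : Type*} [NormedAddCommGroup X] [InnerProductSpace ℝ X]
    (V : Submodule ℝ X) [FiniteDimensional ℝ V]
    (F : X → X) (hF : ContDiff ℝ 1 F)
    (α : ℝ) (hα : 0 < α)
    (hmono : ∀ x y : X, α * ‖x - y‖ ^ 2 ≤ ⟪F x - F y, x - y⟫) :
    -- `F_V = P_V ∘ F|_V` is strongly monotone with constant `α`
    (∀ x y : V, α * ‖x - y‖ ^ 2 ≤
      ⟪Submodule.orthogonalProjection V (F x) - Submodule.orthogonalProjection V (F y), x - y⟫) ∧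
    -- it is a bijection of `V` onto `V`
    Function.Bijective (fun v : V => Submodule.orthogonalProjection V (F v)) ∧
    -- it is continuously differentiable
    ContDiff ℝ 1 (fun v : V => Submodule.orthogonalProjection V (F v)) ∧
    -- and its inverse is continuously differentiable
    (∃ G : V → V,
      Function.LeftInverse G (fun v : V => Submodule.orthogonalProjection V (F v)) ∧
      Function.RightInverse G (fun v : V => Submodule.orthogonalProjection V (F v)) ∧
      ContDiff ℝ 1 G) := by
  have hFV : IsStronglyMonotone α fun v : V => V.orthogonalProjectionOnto (F v) :=
    IsStronglyMonotone.orthogonalProjectionOnto_comp hmono V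
  have hFV₁ : ContDiff ℝ 1 fun v : V => V.orthogonalProjectionOnto (F v) :=
    V.orthogonalProjectionOnto.contDiff.comp (hF.comp V.subtypeL.contDiff)
  exact ⟨hFV, ⟨hFV.injective hα, hFV.surjective hα hFV₁ one_ne_zero⟩, hFV₁,
    hFV.exists_contDiff_inverse hα hFV₁ one_ne_zero⟩

/-- **Strongly monotone `C¹`-diffeomorphisms discretize to strongly monotone
`C¹`-diffeomorphisms** (Lemma 3.8 of the paper).  If `F : X → X` is `C¹` and strongly monotone
with constant `α > 0` and `V ⊆ X` is a finite-dimensional subspace with orthogonal projection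
`P_V`, then `F_V := P_V ∘ F|_V : V → V` is strongly monotone with constant `α`, bijective, `C¹`,
and its inverse is `C¹`, i.e. `F_V` is a `C¹`-diffeomorphism of `V`. -/
theorem strongly_monotone_projected_restriction_is_C1_diffeo
    {X : Type*} [NormedAddCommGroup X] [InnerProductSpace ℝ X] [CompleteSpace X]
    (V : Submodule ℝ X) [FiniteDimensional ℝ V]
    (F : X → X) (hF : ContDiff ℝ 1 F)
    (α : ℝ) (hα : 0 < α)
    (hmono : ∀ x y : X, α * ‖x - y‖ ^ 2 ≤ ⟪F x - F y, x - y⟫) :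
    -- `F_V = P_V ∘ F|_V` is strongly monotone with constant `α`
    (∀ x y : V, α * ‖x - y‖ ^ 2 ≤
      ⟪Submodule.orthogonalProjection V (F x) - Submodule.orthogonalProjection V (F y), x - y⟫) ∧
    -- it is a bijection of `V` onto `V`
    Function.Bijective (fun v : V => Submodule.orthogonalProjection V (F v)) ∧
    -- it is continuously differentiable
    ContDiff ℝ 1 (fun v : V => Submodule.orthogonalProjection V (F v)) ∧
    -- and its inverse is continuously differentiable
    (∃ G : V → V,
      Function.LeftInverse G (fun v : V => Submodule.orthogonalProjection V (F v)) ∧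
      Function.RightInverse G (fun v : V => Submodule.orthogonalProjection V (F v)) ∧
      ContDiff ℝ 1 G) :=
  strongly_monotone_projected_restriction_is_C1_diffeo_general V F hF α hα hmono
end

section
/- Let D ⊂ ℝ^d be a bounded measurable set with positive measure. Let σ : ℝ → ℝ be locally Lipschitz and suppose there are constants C₁, C₂ ≥ 0 and α > 0 with |σ(s)| ≤ C₁|s| + C₂ for all s ∈ ℝ and σ'(s) ≥ α for almost every s ∈ ℝ (the derivative exists a.e. by local Lipschitzness). Then the Nemytskii operator F^σ : L²(D;ℝ) → L²(D;ℝ) defined by F^σ(u) = σ ∘ u is well-defined (maps L²(D;ℝ) into itself) and strongly monotone with constant α: ⟨F^σ(u) − F^σ(v), u − v⟩_{L²} ≥ α‖u − v‖²_{L²} for all u, v ∈ L²(D;ℝ). -/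
open MeasureTheory
open scoped RealInnerProductSpace

/-! A locally Lipschitz `σ` is absolutely continuous on compact intervals, so
`σ b - σ a = ∫ a..b, σ' ≥ α (b - a)` for `a ≤ b`. Hence `(σ p - σ q) (p - q) ≥ α (p - q)²`
pointwise, and integrating this over `D` gives strong monotonicity. The linear growth bound puts
`σ ∘ u` in `L²` because `D` has finite measure. -/

theorem LocallyLipschitz.absolutelyContinuousOnInterval {X : Type*} [PseudoMetricSpace X]
    {f : ℝ → X} (hf : LocallyLipschitz f) (a b : ℝ) : AbsolutelyContinuousOnInterval f a b := by
  obtain ⟨K, hK⟩ := hf.locallyLipschitzOn.exists_lipschitzOnWith_of_compact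
    (s := Set.uIcc a b) isCompact_uIcc
  exact hK.absolutelyContinuousOnInterval

theorem LocallyLipschitz.mul_sub_le_sub_of_ae_le_deriv {f : ℝ → ℝ} (hf : LocallyLipschitz f)
    {α : ℝ} (hderiv : ∀ᵐ s, DifferentiableAt ℝ f s → α ≤ deriv f s) {a b : ℝ} (hab : a ≤ b) :
    α * (b - a) ≤ f b - f a := by
  have hac := hf.absolutelyContinuousOnInterval a b
  rw [← hac.integral_deriv_eq_sub, mul_comm, ← smul_eq_mul, ← intervalIntegral.integral_const]
  refine intervalIntegral.integral_mono_ae_restrict hab intervalIntegrable_const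
    hac.intervalIntegrable_deriv ?_
  rw [Filter.EventuallyLE, ae_restrict_iff' measurableSet_Icc]
  filter_upwards [hderiv, hac.ae_differentiableAt] with s hs hdiff hmem
  exact hs (hdiff (Set.Icc_subset_uIcc hmem))

theorem LocallyLipschitz.mul_sub_sq_le_of_ae_le_deriv {f : ℝ → ℝ} (hf : LocallyLipschitz f)
    {α : ℝ} (hderiv : ∀ᵐ s, DifferentiableAt ℝ f s → α ≤ deriv f s) (p q : ℝ) :
    α * (p - q) ^ 2 ≤ (f p - f q) * (p - q) := by
  rcases le_total q p with h | h
  · nlinarith [hf.mul_sub_le_sub_of_ae_le_deriv hderiv h]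
  · nlinarith [hf.mul_sub_le_sub_of_ae_le_deriv hderiv h]

theorem MeasureTheory.MemLp.comp_of_abs_le_mul_abs_add {Ω : Type*} [MeasurableSpace Ω] {μ : Measure Ω}
    [IsFiniteMeasure μ] {p : ENNReal} {σ : ℝ → ℝ} (hσ : Continuous σ) {C₁ C₂ : ℝ}
    (hgrowth : ∀ s, |σ s| ≤ C₁ * |s| + C₂) {u : Ω → ℝ} (hu : MemLp u p μ) :
    MemLp (fun t => σ (u t)) p μ := by
  refine MemLp.of_le ((hu.norm.const_mul C₁).add (memLp_const C₂))
    (hσ.comp_aestronglyMeasurable hu.aestronglyMeasurable) (.of_forall fun t => ?_)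
  simpa only [Real.norm_eq_abs, Pi.add_apply] using (hgrowth (u t)).trans (le_abs_self _)

section Nemytskii

variable {Ω : Type*} [MeasurableSpace Ω] {μ : Measure Ω}

noncomputable def nemytskii {p : ENNReal} (σ : ℝ → ℝ)
    (hσ : ∀ u : Lp ℝ p μ, MemLp (fun t => σ (u t)) p μ) (u : Lp ℝ p μ) : Lp ℝ p μ :=
  (hσ u).toLp _

theorem coeFn_nemytskii {p : ENNReal} {σ : ℝ → ℝ}
    (hσ : ∀ u : Lp ℝ p μ, MemLp (fun t => σ (u t)) p μ) (u : Lp ℝ p μ) :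
    nemytskii σ hσ u =ᵐ[μ] fun t => σ (u t) :=
  MemLp.coeFn_toLp _

theorem nemytskii_strongly_monotone {σ : ℝ → ℝ}
    (hσ : ∀ u : Lp ℝ 2 μ, MemLp (fun t => σ (u t)) 2 μ) {α : ℝ}
    (hmono : ∀ p q, α * (p - q) ^ 2 ≤ (σ p - σ q) * (p - q)) (u v : Lp ℝ 2 μ) :
    α * ‖u - v‖ ^ 2 ≤ ⟪nemytskii σ hσ u - nemytskii σ hσ v, u - v⟫ := by
  set F := nemytskii σ hσ
  have hnonneg : 0 ≤ ⟪F u - F v - α • (u - v), u - v⟫ := by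
    rw [L2.inner_def]
    refine integral_nonneg_of_ae ?_
    filter_upwards [Lp.coeFn_sub (F u - F v) (α • (u - v)), Lp.coeFn_sub (F u) (F v),
      Lp.coeFn_smul α (u - v), Lp.coeFn_sub u v, coeFn_nemytskii hσ u,
      coeFn_nemytskii hσ v] with t h₁ h₂ h₃ h₄ hu hv
    simp only [Pi.sub_apply, Pi.smul_apply, smul_eq_mul, Pi.zero_apply, RCLike.inner_apply,
      RCLike.conj_to_real] at h₁ h₂ h₃ h₄ ⊢
    rw [h₁, h₂, h₃, h₄, hu, hv]
    nlinarith [hmono (u t) (v t)]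
  rwa [inner_sub_left, real_inner_smul_left, real_inner_self_eq_norm_sq, sub_nonneg] at hnonneg

end Nemytskii

theorem nemytskii_operator_is_strongly_monotone_general
    {d : ℕ} (D : Set (EuclideanSpace ℝ (Fin d)))
    (hDbdd : Bornology.IsBounded D)
    (σ : ℝ → ℝ) (hσlip : LocallyLipschitz σ)
    (C₁ C₂ : ℝ)
    (hgrowth : ∀ s : ℝ, |σ s| ≤ C₁ * |s| + C₂)
    (α : ℝ)
    (hderiv : ∀ᵐ s : ℝ, DifferentiableAt ℝ σ s → α ≤ deriv σ s) :
    -- well-definedness: `σ ∘ u ∈ L²(D;ℝ)` for every `u ∈ L²(D;ℝ)`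
    (∀ u : Lp ℝ 2 (volume.restrict D),
      MemLp (fun t => σ (u t)) 2 (volume.restrict D)) ∧
    -- the Nemytskii operator is strongly monotone with constant `α`
    (∃ F : Lp ℝ 2 (volume.restrict D) → Lp ℝ 2 (volume.restrict D),
      (∀ u, ⇑(F u) =ᵐ[volume.restrict D] fun t => σ (u t)) ∧
      (∀ u v, α * ‖u - v‖ ^ 2 ≤ ⟪F u - F v, u - v⟫)) := by
  have : IsFiniteMeasure (volume.restrict D) :=
    isFiniteMeasure_restrict.2 hDbdd.measure_lt_top.ne
  have hmem : ∀ u : Lp ℝ 2 (volume.restrict D),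
      MemLp (fun t => σ (u t)) 2 (volume.restrict D) := fun u =>
    (Lp.memLp u).comp_of_abs_le_mul_abs_add hσlip.continuous hgrowth
  exact ⟨hmem, nemytskii σ hmem, coeFn_nemytskii hmem,
    nemytskii_strongly_monotone hmem (hσlip.mul_sub_sq_le_of_ae_le_deriv hderiv)⟩

/-- **Strong monotonicity of Nemytskii operators** (Proposition 3.10 of the paper).
Let `D ⊂ ℝ^d` be bounded, measurable, of positive measure, and let `σ : ℝ → ℝ` be locally
Lipschitz with `|σ(s)| ≤ C₁|s| + C₂` and `σ'(s) ≥ α > 0` almost everywhere (wherever the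
derivative exists).  Then the Nemytskii operator `F^σ(u) = σ ∘ u` maps `L²(D;ℝ)` into itself and
is strongly monotone with constant `α`. -/
theorem nemytskii_operator_is_strongly_monotone
    {d : ℕ} (D : Set (EuclideanSpace ℝ (Fin d)))
    (hDmeas : MeasurableSet D) (hDbdd : Bornology.IsBounded D) (hDpos : 0 < volume D)
    (σ : ℝ → ℝ) (hσlip : LocallyLipschitz σ)
    (C₁ C₂ : ℝ) (hC₁ : 0 ≤ C₁) (hC₂ : 0 ≤ C₂)
    (hgrowth : ∀ s : ℝ, |σ s| ≤ C₁ * |s| + C₂)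
    (α : ℝ) (hα : 0 < α)
    (hderiv : ∀ᵐ s : ℝ, DifferentiableAt ℝ σ s → α ≤ deriv σ s) :
    -- well-definedness: `σ ∘ u ∈ L²(D;ℝ)` for every `u ∈ L²(D;ℝ)`
    (∀ u : Lp ℝ 2 (volume.restrict D),
      MemLp (fun t => σ (u t)) 2 (volume.restrict D)) ∧
    -- the Nemytskii operator is strongly monotone with constant `α`
    (∃ F : Lp ℝ 2 (volume.restrict D) → Lp ℝ 2 (volume.restrict D),
      (∀ u, ⇑(F u) =ᵐ[volume.restrict D] fun t => σ (u t)) ∧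
      (∀ u v, α * ‖u - v‖ ^ 2 ≤ ⟪F u - F v, u - v⟫)) :=
  nemytskii_operator_is_strongly_monotone_general D hDbdd σ hσlip C₁ C₂ hgrowth α hderiv
end

section
/- Let X be a real Hilbert space and let F : X → X be a layer of a generalized neural operator, F(x) = x + T₂(G(T₁ x)) with T₁, T₂ compact bounded linear operators and G continuously Fréchet differentiable (bounded and globally Lipschitz). If F is strongly monotone with constant α > 0, then F is a C¹-diffeomorphism of X: F is bijective, its inverse F⁻¹ : X → X is Lipschitz with constant 1/α, and F⁻¹ is continuously Fréchet differentiable. -/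
open scoped RealInnerProductSpace NNReal Topology
open Filter

/-!
Strong monotonicity makes `F` anti-Lipschitz with constant `1/α`, hence injective with closed
range, and passes to the derivative: `α‖v‖² ≤ ⟪F'(x) v, v⟫`. By Lax–Milgram every `F'(x)` is then
an isomorphism, so by the inverse function theorem `F` is an open map. Its range is therefore
clopen, hence all of `X`, and `F` is a homeomorphism with invertible derivative everywhere, whose
inverse is `C¹`.
-/

theorem AntilipschitzWith.isClosed_range_of_continuous {α β : Type*} [PseudoEMetricSpace α]
    [CompleteSpace α] [EMetricSpace β] {K : ℝ≥0} {f : α → β} (hf : AntilipschitzWith K f)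
    (hc : Continuous f) : IsClosed (Set.range f) := by
  refine isClosed_of_closure_subset fun y hy => ?_
  obtain ⟨u, hu, hlim⟩ := mem_closure_iff_seq_limit.1 hy
  choose x hx using hu
  have hfx : CauchySeq (f ∘ x) := by
    simpa only [Function.comp_def, hx] using hlim.cauchySeq
  have hxc : CauchySeq x := cauchySeq_iff_tendsto.2 <|
    ((tendsto_comap_iff (g := Prod.map f f) (f := Prod.map x x)).2
      (cauchySeq_iff_tendsto.1 hfx)).mono_right hf.comap_uniformity_le
  obtain ⟨a, ha⟩ := cauchySeq_tendsto_of_complete hxc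
  refine ⟨a, tendsto_nhds_unique ((hc.tendsto a).comp ha) ?_⟩
  simpa only [Function.comp_def, hx] using hlim

theorem ContinuousLinearMap.exists_equiv_of_coercive {E : Type*} [NormedAddCommGroup E]
    [InnerProductSpace ℝ E] [CompleteSpace E] (T : E →L[ℝ] E) {α : ℝ} (hα : 0 < α)
    (hT : ∀ v, α * ‖v‖ ^ 2 ≤ ⟪T v, v⟫) : ∃ e : E ≃L[ℝ] E, (e : E →L[ℝ] E) = T := by
  have hB : IsCoercive ((innerSL ℝ).comp T) :=
    ⟨α, hα, fun v => le_of_eq_of_le (by ring) (hT v)⟩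
  refine ⟨hB.continuousLinearEquivOfBilin, ContinuousLinearMap.ext fun v => ?_⟩
  refine ext_inner_right ℝ fun w => ?_
  simp [hB.continuousLinearEquivOfBilin_apply v w]

def StronglyMonotone {E : Type*} [NormedAddCommGroup E] [InnerProductSpace ℝ E]
    (α : ℝ) (f : E → E) : Prop :=
  ∀ x y, α * ‖x - y‖ ^ 2 ≤ ⟪f x - f y, x - y⟫

namespace StronglyMonotone

variable {E : Type*} [NormedAddCommGroup E] [InnerProductSpace ℝ E] {α : ℝ} {f : E → E}

theorem norm_sub_le (hf : StronglyMonotone α f) (hα : 0 < α) (x y : E) :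
    ‖x - y‖ ≤ 1 / α * ‖f x - f y‖ := by
  rcases eq_or_ne x y with rfl | hxy
  · simp
  have hpos : 0 < ‖x - y‖ := norm_pos_iff.2 (sub_ne_zero.2 hxy)
  have h : α * ‖x - y‖ * ‖x - y‖ ≤ ‖f x - f y‖ * ‖x - y‖ := by
    calc α * ‖x - y‖ * ‖x - y‖ = α * ‖x - y‖ ^ 2 := by ring
      _ ≤ ⟪f x - f y, x - y⟫ := hf x y
      _ ≤ ‖f x - f y‖ * ‖x - y‖ := real_inner_le_norm _ _
  rw [one_div_mul_eq_div, le_div_iff₀ hα, mul_comm]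
  exact le_of_mul_le_mul_right h hpos

theorem antilipschitzWith (hf : StronglyMonotone α f) (hα : 0 < α) :
    AntilipschitzWith (Real.toNNReal (1 / α)) f :=
  AntilipschitzWith.of_le_mul_dist fun x y => by
    simpa only [dist_eq_norm, Real.coe_toNNReal _ (one_div_pos.2 hα).le] using
      hf.norm_sub_le hα x y

theorem mul_norm_sq_le_inner_of_hasFDerivAt {f' : E →L[ℝ] E} {x : E}
    (hf : StronglyMonotone α f) (hf' : HasFDerivAt f f' x) (v : E) : α * ‖v‖ ^ 2 ≤ ⟪f' v, v⟫ := by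
  have hlim : Tendsto (fun n : ℕ => ⟪(n : ℝ) • (f (x + (n : ℝ)⁻¹ • v) - f x), v⟫) atTop
      (𝓝 ⟪f' v, v⟫) :=
    (hf'.lim v (by simpa using tendsto_natCast_atTop_atTop)).inner tendsto_const_nhds
  refine ge_of_tendsto hlim (eventually_gt_atTop 0 |>.mono fun n hn => ?_)
  have hc : (0 : ℝ) < n := Nat.cast_pos.2 hn
  have h := hf (x + (n : ℝ)⁻¹ • v) x
  rw [add_sub_cancel_left, norm_smul, real_inner_smul_right, Real.norm_eq_abs,
    abs_of_pos (inv_pos.2 hc)] at h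
  rw [real_inner_smul_left]
  calc α * ‖v‖ ^ 2 = (n : ℝ) ^ 2 * (α * ((n : ℝ)⁻¹ * ‖v‖) ^ 2) := by field_simp
    _ ≤ (n : ℝ) ^ 2 * ((n : ℝ)⁻¹ * ⟪f (x + (n : ℝ)⁻¹ • v) - f x, v⟫) := by gcongr
    _ = _ := by field_simp

variable [CompleteSpace E]

theorem exists_hasStrictFDerivAt_equiv (hf : StronglyMonotone α f) (hα : 0 < α)
    (hd : ContDiff ℝ 1 f) :
    ∃ f' : E → E ≃L[ℝ] E, ∀ x, HasStrictFDerivAt f (f' x : E →L[ℝ] E) x := by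
  have hstrict (x : E) : HasStrictFDerivAt f (fderiv ℝ f x) x := hd.hasStrictFDerivAt one_ne_zero
  choose e he using fun x => (fderiv ℝ f x).exists_equiv_of_coercive hα
    (hf.mul_norm_sq_le_inner_of_hasFDerivAt (hstrict x).hasFDerivAt)
  exact ⟨e, fun x => (he x).symm ▸ hstrict x⟩

theorem isHomeomorph (hf : StronglyMonotone α f) (hα : 0 < α) (hd : ContDiff ℝ 1 f) :
    IsHomeomorph f := by
  obtain ⟨f', hf'⟩ := hf.exists_hasStrictFDerivAt_equiv hα hd
  have hopen : IsOpenMap f := isOpenMap_of_hasStrictFDerivAt_equiv hf'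
  have hclosed : IsClosed (Set.range f) :=
    (hf.antilipschitzWith hα).isClosed_range_of_continuous hd.continuous
  have hrange : Set.range f = Set.univ :=
    IsClopen.eq_univ ⟨hclosed, hopen.isOpen_range⟩ (Set.range_nonempty f)
  exact ⟨hd.continuous, hopen, (hf.antilipschitzWith hα).injective, Set.range_eq_univ.1 hrange⟩

end StronglyMonotone

theorem strongly_monotone_neural_operator_layer_is_C1_diffeo_general
    {X : Type*} [NormedAddCommGroup X] [InnerProductSpace ℝ X] [CompleteSpace X]
    (T₁ T₂ : X →L[ℝ] X)
    (G : X → X) (hG : ContDiff ℝ 1 G)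
    (F : X → X) (hF : ∀ x, F x = x + T₂ (G (T₁ x)))
    (α : ℝ) (hα : 0 < α)
    (hmono : ∀ x y : X, α * ‖x - y‖ ^ 2 ≤ ⟪F x - F y, x - y⟫) :
    Function.Bijective F ∧
    ∃ Finv : X → X,
      Function.LeftInverse Finv F ∧ Function.RightInverse Finv F ∧
      (∀ x y : X, ‖Finv x - Finv y‖ ≤ (1 / α) * ‖x - y‖) ∧
      ContDiff ℝ 1 Finv := by
  have hFmono : StronglyMonotone α F := hmono
  have hFC : ContDiff ℝ 1 F := by
    rw [show F = fun x => x + T₂ (G (T₁ x)) from funext hF]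
    exact contDiff_id.add (T₂.contDiff.comp (hG.comp T₁.contDiff))
  have hhomeo := hFmono.isHomeomorph hα hFC
  obtain ⟨F', hF'⟩ := hFmono.exists_hasStrictFDerivAt_equiv hα hFC
  let Φ : X ≃ₜ X := hhomeo.homeomorph
  have hright : Function.RightInverse Φ.symm F := Φ.apply_symm_apply
  refine ⟨hhomeo.bijective, Φ.symm, Φ.symm_apply_apply, hright, fun x y => ?_,
    Φ.contDiff_symm (fun x => (hF' x).hasFDerivAt) hFC⟩
  simpa only [hright x, hright y] using hFmono.norm_sub_le hα (Φ.symm x) (Φ.symm y)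

/-- **Strongly monotone neural operator layers are `C¹`-diffeomorphisms**
(Lemma 3.11 of the paper).  Let `F(x) = x + T₂(G(T₁ x))` be a layer of a generalized neural
operator on a real Hilbert space `X` (`T₁, T₂` compact bounded linear operators, `G` of class
`C¹`, bounded and globally Lipschitz).  If `F` is strongly monotone with constant `α > 0`, then
`F` is bijective, its inverse is Lipschitz with constant `1/α`, and its inverse is `C¹`. -/
theorem strongly_monotone_neural_operator_layer_is_C1_diffeo
    {X : Type*} [NormedAddCommGroup X] [InnerProductSpace ℝ X] [CompleteSpace X]
    (T₁ T₂ : X →L[ℝ] X)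
    (hT₁ : IsCompactOperator (⇑T₁)) (hT₂ : IsCompactOperator (⇑T₂))
    (G : X → X) (hG : ContDiff ℝ 1 G)
    (hGbdd : ∃ c₀ : ℝ, ∀ x, ‖G x‖ ≤ c₀) (hGlip : ∃ L : ℝ≥0, LipschitzWith L G)
    (F : X → X) (hF : ∀ x, F x = x + T₂ (G (T₁ x)))
    (α : ℝ) (hα : 0 < α)
    (hmono : ∀ x y : X, α * ‖x - y‖ ^ 2 ≤ ⟪F x - F y, x - y⟫) :
    Function.Bijective F ∧
    ∃ Finv : X → X,
      Function.LeftInverse Finv F ∧ Function.RightInverse Finv F ∧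
      (∀ x y : X, ‖Finv x - Finv y‖ ≤ (1 / α) * ‖x - y‖) ∧
      ContDiff ℝ 1 Finv :=
  strongly_monotone_neural_operator_layer_is_C1_diffeo_general T₁ T₂ G hG F hF α hα hmono
end

section
/- Let X be a real Hilbert space, let T₁, T₂ : X → X be nonzero compact bounded linear operators, and let G : X → X be continuously Fréchet differentiable. Suppose the Fréchet derivative of G satisfies ‖DG|_x‖_{X→X} ≤ (1/2)·‖T₁‖_{X→X}⁻¹·‖T₂‖_{X→X}⁻¹ for all x ∈ X. Then the map F : X → X, F(u) = u + T₂(G(T₁ u)), is strongly monotone with constant 1/2. -/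
/-!
Write `F = id + P` with `P = T₂ ∘ G ∘ T₁`. By the mean value inequality `G` is Lipschitz with
constant `½‖T₁‖⁻¹‖T₂‖⁻¹`, so `P` is Lipschitz with constant `‖T₂‖ · ½‖T₁‖⁻¹‖T₂‖⁻¹ · ‖T₁‖ ≤ ½`.
Cauchy–Schwarz then gives `⟪P x - P y, x - y⟫ ≥ -½‖x - y‖²`, and adding `⟪x - y, x - y⟫ = ‖x - y‖²`
yields strong monotonicity of `F` with constant `½`.
-/

open scoped RealInnerProductSpace NNReal

theorem LipschitzWith.one_sub_mul_norm_sub_sq_le_inner {E : Type*} [NormedAddCommGroup E]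
    [InnerProductSpace ℝ E] {P : E → E} {K : ℝ≥0} (hP : LipschitzWith K P) (x y : E) :
    (1 - K) * ‖x - y‖ ^ 2 ≤ ⟪(x + P x) - (y + P y), x - y⟫ := by
  have hsplit : (x + P x) - (y + P y) = (x - y) + (P x - P y) := by abel
  have hcross : -(K * ‖x - y‖ ^ 2) ≤ ⟪P x - P y, x - y⟫ :=
    calc -(K * ‖x - y‖ ^ 2) = -(K * ‖x - y‖ * ‖x - y‖) := by ring
      _ ≤ -(‖P x - P y‖ * ‖x - y‖) := by gcongr; exact hP.norm_sub_le x y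
      _ ≤ ⟪P x - P y, x - y⟫ := neg_le_of_abs_le (abs_real_inner_le_norm _ _)
  rw [hsplit, inner_add_left, real_inner_self_eq_norm_sq]
  linarith

theorem ContinuousLinearMap.lipschitzWith_comp_comp_of_norm_fderiv_le {𝕜 E F F' E' : Type*}
    [RCLike 𝕜] [NormedAddCommGroup E] [NormedSpace 𝕜 E] [NormedAddCommGroup F] [NormedSpace 𝕜 F]
    [NormedAddCommGroup F'] [NormedSpace 𝕜 F'] [NormedAddCommGroup E'] [NormedSpace 𝕜 E']
    (A : E →L[𝕜] F) (B : F' →L[𝕜] E') {G : F → F'} (hG : Differentiable 𝕜 G) {C : ℝ≥0}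
    (hC : ∀ x, ‖fderiv 𝕜 G x‖ ≤ C * ‖A‖⁻¹ * ‖B‖⁻¹) :
    LipschitzWith C (fun u => B (G (A u))) := by
  have hG_lip : LipschitzWith (C * ‖A‖₊⁻¹ * ‖B‖₊⁻¹) G :=
    lipschitzWith_of_nnnorm_fderiv_le hG fun x => by
      rw [← NNReal.coe_le_coe]; push_cast; exact hC x
  refine (B.lipschitz.comp (hG_lip.comp A.lipschitz)).weaken ?_
  calc ‖B‖₊ * (C * ‖A‖₊⁻¹ * ‖B‖₊⁻¹ * ‖A‖₊)
        = C * (‖A‖₊⁻¹ * ‖A‖₊) * (‖B‖₊ * ‖B‖₊⁻¹) := by ring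
    _ ≤ C * 1 * 1 := by gcongr <;> [exact inv_mul_le_one; exact mul_inv_le_one]
    _ = C := by ring

theorem neural_operator_layer_strongly_monotone_of_small_derivative_general
    {X : Type*} [NormedAddCommGroup X] [InnerProductSpace ℝ X]
    (T₁ T₂ : X →L[ℝ] X)
    (G : X → X) (hG : ContDiff ℝ 1 G)
    (hDG : ∀ x : X, ‖fderiv ℝ G x‖ ≤ (1 / 2) * ‖T₁‖⁻¹ * ‖T₂‖⁻¹) :
    ∀ x y : X, (1 / 2) * ‖x - y‖ ^ 2 ≤
      ⟪(x + T₂ (G (T₁ x))) - (y + T₂ (G (T₁ y))), x - y⟫ := by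
  have hP : LipschitzWith (1 / 2) (fun u => T₂ (G (T₁ u))) :=
    T₁.lipschitzWith_comp_comp_of_norm_fderiv_le T₂ (hG.differentiable one_ne_zero)
      (by simpa using hDG)
  intro x y
  convert hP.one_sub_mul_norm_sub_sq_le_inner x y using 2
  norm_num

/-- **A sufficient condition for strong monotonicity of a neural operator layer**
(Lemma 3.13 of the paper).  If `T₁, T₂ : X → X` are nonzero compact bounded linear operators,
`G : X → X` is `C¹` and `‖DG|_x‖ ≤ (1/2)‖T₁‖⁻¹‖T₂‖⁻¹` for all `x`, then
`F(u) = u + T₂(G(T₁ u))` is strongly monotone with constant `1/2`. -/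
theorem neural_operator_layer_strongly_monotone_of_small_derivative
    {X : Type*} [NormedAddCommGroup X] [InnerProductSpace ℝ X] [CompleteSpace X]
    (T₁ T₂ : X →L[ℝ] X)
    (hT₁c : IsCompactOperator (⇑T₁)) (hT₂c : IsCompactOperator (⇑T₂))
    (hT₁ : T₁ ≠ 0) (hT₂ : T₂ ≠ 0)
    (G : X → X) (hG : ContDiff ℝ 1 G)
    (hDG : ∀ x : X, ‖fderiv ℝ G x‖ ≤ (1 / 2) * ‖T₁‖⁻¹ * ‖T₂‖⁻¹) :
    ∀ x y : X, (1 / 2) * ‖x - y‖ ^ 2 ≤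
      ⟪(x + T₂ (G (T₁ x))) - (y + T₂ (G (T₁ y))), x - y⟫ :=
  neural_operator_layer_strongly_monotone_of_small_derivative_general T₁ T₂ G hG hDG
end

section
/- Let X be a real Hilbert space and let F : X → X be a layer of a generalized neural operator, F(x) = x + T₂(G(T₁ x)) with T₁, T₂ compact bounded linear operators and G continuous. Then for every r > 0 and ε > 0 there exists a finite-dimensional subspace V₀ ⊆ X such that for every finite-dimensional subspace V with V₀ ⊆ V one has sup_{x ∈ B̄_X(0,r)} ‖(Id − P_V)(T₂(G(T₁ x)))‖ ≤ ε; in particular, for such V, sup_{x ∈ V ∩ B̄_X(0,r)} ‖P_V(F(x)) − F(x)‖ ≤ ε, i.e., the linear discretizations P_V ∘ F|_V converge to F uniformly on bounded sets as V grows. -/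
/-
The nonlinear part `x ↦ T₂ (G (T₁ x))` of the layer maps the ball `B̄(0, r)` into a compact set
`K`, since `T₁` is compact and `T₂ ∘ G` is continuous. Cover `K` by finitely many `ε`-balls and
let `V₀` be the span of their centres. For `V ⊇ V₀`, the projection `P_V` is the best
approximation from `V`, so every point of `K` lies within `ε` of its projection. On `V` the
identity part of the layer is fixed by `P_V`, so `P_V (F x) - F x` is exactly the projection
error of the nonlinear part.
-/

open Metric
open scoped RealInnerProductSpace

/-- The orthogonal projection onto a finite-dimensional subspace `W`, viewed as a continuous
linear map `X → X`. -/
noncomputable def projFD {X : Type*} [NormedAddCommGroup X] [InnerProductSpace ℝ X]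
    [CompleteSpace X] (W : Submodule ℝ X) (hW : FiniteDimensional ℝ W) : X →L[ℝ] X :=
  haveI := hW
  W.subtypeL.comp W.orthogonalProjection

section Projection

variable {X : Type*} [NormedAddCommGroup X] [InnerProductSpace ℝ X] [CompleteSpace X]
  (V : Submodule ℝ X) (hV : FiniteDimensional ℝ V)

theorem projFD_apply_of_mem {x : X} (hx : x ∈ V) : projFD V hV x = x := by
  have := hV
  exact (Submodule.starProjection_eq_self_iff (K := V)).2 hx

theorem norm_sub_projFD_le {y c : X} (hc : c ∈ V) : ‖y - projFD V hV y‖ ≤ ‖y - c‖ := by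
  have := hV
  have hbdd : BddBelow (Set.range fun v : V => ‖y - (v : X)‖) :=
    ⟨0, by rintro _ ⟨v, rfl⟩; positivity⟩
  calc ‖y - projFD V hV y‖ = ⨅ v : V, ‖y - (v : X)‖ := Submodule.starProjection_minimal y
    _ ≤ ‖y - c‖ := ciInf_le hbdd ⟨c, hc⟩

end Projection

theorem IsCompact.exists_finiteDimensional_forall_norm_sub_projFD_le
    {X : Type*} [NormedAddCommGroup X] [InnerProductSpace ℝ X] [CompleteSpace X]
    {K : Set X} (hK : IsCompact K) {ε : ℝ} (hε : 0 < ε) :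
    ∃ V₀ : Submodule ℝ X, FiniteDimensional ℝ V₀ ∧
      ∀ (V : Submodule ℝ X) (hV : FiniteDimensional ℝ V), V₀ ≤ V →
        ∀ y ∈ K, ‖y - projFD V hV y‖ ≤ ε := by
  obtain ⟨t, -, ht, hKt⟩ := hK.elim_finite_subcover_image (b := K) (c := fun c => ball c ε)
    (fun _ _ => isOpen_ball) (fun y hy => Set.mem_iUnion₂.2 ⟨y, hy, mem_ball_self hε⟩)
  refine ⟨Submodule.span ℝ t, FiniteDimensional.span_of_finite ℝ ht, fun V hV hV₀ y hy => ?_⟩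
  obtain ⟨c, hct, hyc⟩ := Set.mem_iUnion₂.1 (hKt hy)
  calc ‖y - projFD V hV y‖ ≤ ‖y - c‖ := norm_sub_projFD_le V hV (hV₀ (Submodule.subset_span hct))
    _ ≤ ε := (mem_ball_iff_norm.1 hyc).le

theorem IsCompactOperator.exists_isCompact_image_closedBall_comp
    {E F : Type*} [NormedAddCommGroup E] [NormedSpace ℝ E] [TopologicalSpace F]
    {T : E →L[ℝ] E} (hT : IsCompactOperator T) {g : E → F} (hg : Continuous g) (r : ℝ) :
    ∃ K : Set F, IsCompact K ∧ ∀ x ∈ closedBall (0 : E) r, g (T x) ∈ K := by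
  obtain ⟨K, hK, hTK⟩ := hT.image_closedBall_subset_compact (𝕜₁ := ℝ) r
  exact ⟨g '' K, hK.image hg, fun x hx => Set.mem_image_of_mem g (hTK ⟨x, hx, rfl⟩)⟩

theorem linear_discretizations_of_layer_converge_uniformly_general
    {X : Type*} [NormedAddCommGroup X] [InnerProductSpace ℝ X] [CompleteSpace X]
    (T₁ T₂ : X →L[ℝ] X)
    (hT₁ : IsCompactOperator (⇑T₁))
    (G : X → X) (hG : Continuous G)
    (F : X → X) (hF : ∀ x, F x = x + T₂ (G (T₁ x)))
    (r ε : ℝ) (hε : 0 < ε) :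
    ∃ V₀ : Submodule ℝ X, FiniteDimensional ℝ V₀ ∧
      ∀ (V : Submodule ℝ X) (hV : FiniteDimensional ℝ V), V₀ ≤ V →
        (∀ x ∈ closedBall (0:X) r,
          ‖T₂ (G (T₁ x)) - projFD V hV (T₂ (G (T₁ x)))‖ ≤ ε) ∧
        (∀ x ∈ closedBall (0:X) r, x ∈ V → ‖projFD V hV (F x) - F x‖ ≤ ε) := by
  obtain ⟨K, hK, hmem⟩ := hT₁.exists_isCompact_image_closedBall_comp (T₂.continuous.comp hG) r
  obtain ⟨V₀, hV₀, hV₀K⟩ := hK.exists_finiteDimensional_forall_norm_sub_projFD_le hε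
  refine ⟨V₀, hV₀, fun V hV hle => ?_⟩
  have hnonlin : ∀ x ∈ closedBall (0:X) r,
      ‖T₂ (G (T₁ x)) - projFD V hV (T₂ (G (T₁ x)))‖ ≤ ε :=
    fun x hx => hV₀K V hV hle _ (hmem x hx)
  refine ⟨hnonlin, fun x hx hxV => ?_⟩
  rw [hF, map_add, projFD_apply_of_mem V hV hxV, add_sub_add_left_eq_sub, norm_sub_rev]
  exact hnonlin x hx

/-- **Linear discretizations of neural operator layers converge uniformly on bounded sets.**
Let `F(x) = x + T₂(G(T₁ x))` be a layer of a generalized neural operator (`T₁, T₂` compact,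
`G` continuous).  For all `r, ε > 0` there is a finite-dimensional subspace `V₀ ⊆ X` such that
for every finite-dimensional `V ⊇ V₀` we have
`sup_{x ∈ B̄(0,r)} ‖(Id − P_V)(T₂(G(T₁ x)))‖ ≤ ε`, and consequently
`sup_{x ∈ V ∩ B̄(0,r)} ‖P_V(F x) − F x‖ ≤ ε`. -/
theorem linear_discretizations_of_layer_converge_uniformly
    {X : Type*} [NormedAddCommGroup X] [InnerProductSpace ℝ X] [CompleteSpace X]
    (T₁ T₂ : X →L[ℝ] X)
    (hT₁ : IsCompactOperator (⇑T₁)) (hT₂ : IsCompactOperator (⇑T₂))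
    (G : X → X) (hG : Continuous G)
    (F : X → X) (hF : ∀ x, F x = x + T₂ (G (T₁ x)))
    (r ε : ℝ) (hr : 0 < r) (hε : 0 < ε) :
    ∃ V₀ : Submodule ℝ X, FiniteDimensional ℝ V₀ ∧
      ∀ (V : Submodule ℝ X) (hV : FiniteDimensional ℝ V), V₀ ≤ V →
        (∀ x ∈ closedBall (0:X) r,
          ‖T₂ (G (T₁ x)) - projFD V hV (T₂ (G (T₁ x)))‖ ≤ ε) ∧
        (∀ x ∈ closedBall (0:X) r, x ∈ V → ‖projFD V hV (F x) - F x‖ ≤ ε) :=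
  linear_discretizations_of_layer_converge_uniformly_general T₁ T₂ hT₁ G hG F hF r ε hε
end

section
/- Let X be a separable real Hilbert space with orthonormal basis (φ_n)_{n∈ℕ}, let δ ∈ (0,1), T, N ∈ ℕ, and for t = 1, …, T let f_t : ℝ^N → ℝ^N be continuously differentiable maps such that each g_t := D_N ∘ f_t ∘ E_N : X → X is Lipschitz with constant at most δ. Then the composition G := (Id + g_T) ∘ ⋯ ∘ (Id + g₁) : X → X is a C¹-diffeomorphism of X: it is bijective, continuously Fréchet differentiable, and its inverse is continuously Fréchet differentiable. In particular each factor Id + g_t is strongly monotone with constant 1 − δ and a C¹-diffeomorphism of X. -/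
open scoped RealInnerProductSpace

/-- The coordinate map `E_N u = (⟨u,φ₁⟩, …, ⟨u,φ_N⟩)` relative to an orthonormal basis `φ`. -/
noncomputable def coordEN {X : Type*} [NormedAddCommGroup X] [InnerProductSpace ℝ X]
    (φ : ℕ → X) (N : ℕ) (u : X) : Fin N → ℝ :=
  fun i => ⟪u, φ (i : ℕ)⟫

/-- The synthesis map `D_N α = Σ_{n ≤ N} α_n φ_n` relative to an orthonormal basis `φ`. -/
noncomputable def synthDN {X : Type*} [NormedAddCommGroup X] [InnerProductSpace ℝ X]
    (φ : ℕ → X) (N : ℕ) (a : Fin N → ℝ) : X :=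
  ∑ i : Fin N, a i • φ (i : ℕ)

/-- `compChain H n = H (n-1) ∘ ⋯ ∘ H 1 ∘ H 0`, the composition of the first `n` maps. -/
def compChain {X : Type*} (H : ℕ → X → X) : ℕ → X → X
  | 0 => id
  | n + 1 => H n ∘ compChain H n

/-!
Each block `z ↦ z + g z` perturbs the identity by a `δ`-Lipschitz map with `δ < 1`, so it is
injective and, by the contraction principle, surjective. Its derivative `1 + Dg(z)` is invertible
by a Neumann series since `‖Dg(z)‖ ≤ δ < 1`, so the inverse is `C¹` by the inverse function
theorem. Strong monotonicity of a block is the Cauchy–Schwarz inequality, and the network is a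
composition of blocks.
-/

open scoped NNReal
open Function Set

section C1Diffeomorph

variable (𝕜 : Type*) [NontriviallyNormedField 𝕜] {E : Type*} [NormedAddCommGroup E]
  [NormedSpace 𝕜 E]

def IsC1Diffeomorph (F : E → E) : Prop :=
  Bijective F ∧ ContDiff 𝕜 1 F ∧
    ∃ G : E → E, LeftInverse G F ∧ RightInverse G F ∧ ContDiff 𝕜 1 G

variable {𝕜}

theorem isC1Diffeomorph_id : IsC1Diffeomorph 𝕜 (id : E → E) :=
  ⟨bijective_id, contDiff_id, id, fun _ ↦ rfl, fun _ ↦ rfl, contDiff_id⟩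

theorem IsC1Diffeomorph.comp {F G : E → E} (hF : IsC1Diffeomorph 𝕜 F)
    (hG : IsC1Diffeomorph 𝕜 G) : IsC1Diffeomorph 𝕜 (F ∘ G) := by
  obtain ⟨hFbij, hFC1, F', hF'l, hF'r, hF'C1⟩ := hF
  obtain ⟨hGbij, hGC1, G', hG'l, hG'r, hG'C1⟩ := hG
  exact ⟨hFbij.comp hGbij, hFC1.comp hGC1, G' ∘ F', hF'l.comp hG'l, hF'r.comp hG'r,
    hG'C1.comp hF'C1⟩

theorem isC1Diffeomorph_compChain {H : ℕ → E → E} {T : ℕ}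
    (hH : ∀ t < T, IsC1Diffeomorph 𝕜 (H t)) : IsC1Diffeomorph 𝕜 (compChain H T) := by
  induction T with
  | zero => exact isC1Diffeomorph_id
  | succ n ih => exact (hH n n.lt_succ_self).comp (ih fun t ht ↦ hH t (ht.trans n.lt_succ_self))

theorem Homeomorph.isC1Diffeomorph [CompleteSpace E] (h : E ≃ₜ E) {h' : E → E ≃L[𝕜] E}
    (hderiv : ∀ a, HasFDerivAt h (h' a : E →L[𝕜] E) a) (hC1 : ContDiff 𝕜 1 h) :
    IsC1Diffeomorph 𝕜 h :=
  ⟨h.bijective, hC1, h.symm, h.symm_apply_apply, h.apply_symm_apply,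
    h.contDiff_symm hderiv hC1⟩

theorem isC1Diffeomorph_id_add [CompleteSpace E] {g : E → E} {K : ℝ≥0}
    (hgC1 : ContDiff 𝕜 1 g) (hg : LipschitzWith K g) (hK : K < 1) :
    IsC1Diffeomorph 𝕜 (fun z ↦ z + g z) := by
  have happrox : ApproximatesLinearOn (fun z ↦ z + g z)
      ((ContinuousLinearEquiv.refl 𝕜 E : E ≃L[𝕜] E) : E →L[𝕜] E) univ K := by
    refine LipschitzOnWith.approximatesLinearOn ?_
    convert hg.lipschitzOnWith (s := univ) using 1
    ext z
    simp
  have hK' : Subsingleton E ∨ K < ‖((ContinuousLinearEquiv.refl 𝕜 E).symm : E →L[𝕜] E)‖₊⁻¹ := by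
    rcases subsingleton_or_nontrivial E with hE | hE
    · exact .inl hE
    · right
      simpa using hK
  have hg' : ∀ a, ‖-fderiv 𝕜 g a‖ < 1 := fun a ↦ by
    rw [norm_neg]
    exact (norm_fderiv_le_of_lipschitz 𝕜 hg).trans_lt hK
  refine (happrox.toHomeomorph _ hK').isC1Diffeomorph
    (h' := fun a ↦ .ofUnit (Units.oneSub (-fderiv 𝕜 g a) (hg' a))) (fun a ↦ ?_)
    (contDiff_id.add hgC1)
  change HasFDerivAt (fun z ↦ z + g z) (1 - -fderiv 𝕜 g a) a
  rw [sub_neg_eq_add]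
  exact (hasFDerivAt_id a).add (hgC1.differentiable one_ne_zero a).hasFDerivAt

end C1Diffeomorph

section Residual

variable {X : Type*} [NormedAddCommGroup X] [InnerProductSpace ℝ X]

theorem one_sub_mul_norm_sq_le_inner_add_sub_add {δ : ℝ} {g : X → X}
    (hg : ∀ x y : X, ‖g x - g y‖ ≤ δ * ‖x - y‖) (x y : X) :
    (1 - δ) * ‖x - y‖ ^ 2 ≤ ⟪(x + g x) - (y + g y), x - y⟫ := by
  have hsplit : (x + g x) - (y + g y) = (x - y) + (g x - g y) := by abel
  have hcs : -(‖g x - g y‖ * ‖x - y‖) ≤ ⟪g x - g y, x - y⟫ :=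
    (abs_le.1 (abs_real_inner_le_norm _ _)).1
  rw [hsplit, inner_add_left, real_inner_self_eq_norm_sq]
  nlinarith [norm_nonneg (x - y), hg x y]

theorem contDiff_coordEN (φ : ℕ → X) (N : ℕ) {n : WithTop ℕ∞} :
    ContDiff ℝ n (coordEN φ N) :=
  contDiff_pi.2 fun _ ↦ contDiff_id.inner ℝ contDiff_const

theorem contDiff_synthDN (φ : ℕ → X) (N : ℕ) {n : WithTop ℕ∞} :
    ContDiff ℝ n (synthDN φ N) :=
  ContDiff.sum fun i _ ↦ (contDiff_apply ℝ ℝ i).smul contDiff_const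

end Residual

theorem residual_network_is_C1_diffeomorphism_general
    {X : Type*} [NormedAddCommGroup X] [InnerProductSpace ℝ X] [CompleteSpace X]
    (φ : ℕ → X)
    (δ : ℝ) (hδ : δ ∈ Set.Ioo (0:ℝ) 1)
    (T N : ℕ) (f : ℕ → (Fin N → ℝ) → (Fin N → ℝ))
    (hf : ∀ t < T, ContDiff ℝ 1 (f t))
    (hlip : ∀ t < T, ∀ x y : X,
      ‖synthDN φ N (f t (coordEN φ N x)) - synthDN φ N (f t (coordEN φ N y))‖ ≤ δ * ‖x - y‖) :
    -- the full residual network is a `C¹`-diffeomorphism of `X`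
    (Function.Bijective (compChain (fun t z => z + synthDN φ N (f t (coordEN φ N z))) T) ∧
     ContDiff ℝ 1 (compChain (fun t z => z + synthDN φ N (f t (coordEN φ N z))) T) ∧
     ∃ Ginv : X → X,
       Function.LeftInverse Ginv (compChain (fun t z => z + synthDN φ N (f t (coordEN φ N z))) T) ∧
       Function.RightInverse Ginv (compChain (fun t z => z + synthDN φ N (f t (coordEN φ N z))) T) ∧
       ContDiff ℝ 1 Ginv) ∧
    -- each residual block is strongly monotone with constant `1 − δ` and a `C¹`-diffeomorphism
    (∀ t < T,
      (∀ x y : X, (1 - δ) * ‖x - y‖ ^ 2 ≤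
        ⟪(x + synthDN φ N (f t (coordEN φ N x))) - (y + synthDN φ N (f t (coordEN φ N y))),
          x - y⟫) ∧
      Function.Bijective (fun z : X => z + synthDN φ N (f t (coordEN φ N z))) ∧
      ContDiff ℝ 1 (fun z : X => z + synthDN φ N (f t (coordEN φ N z))) ∧
      ∃ Hinv : X → X,
        Function.LeftInverse Hinv (fun z : X => z + synthDN φ N (f t (coordEN φ N z))) ∧
        Function.RightInverse Hinv (fun z : X => z + synthDN φ N (f t (coordEN φ N z))) ∧
        ContDiff ℝ 1 Hinv) := by
  obtain ⟨hδ₀, hδ₁⟩ := hδ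
  have hblock : ∀ t < T,
      IsC1Diffeomorph ℝ (fun z : X ↦ z + synthDN φ N (f t (coordEN φ N z))) := fun t ht ↦
    isC1Diffeomorph_id_add (K := ⟨δ, hδ₀.le⟩)
      ((contDiff_synthDN φ N).comp ((hf t ht).comp (contDiff_coordEN φ N)))
      (lipschitzWith_iff_norm_sub_le.2 (hlip t ht)) hδ₁
  exact ⟨isC1Diffeomorph_compChain hblock,
    fun t ht ↦ ⟨one_sub_mul_norm_sq_le_inner_add_sub_add (hlip t ht), hblock t ht⟩⟩

/-- **Residual networks with small `C¹` blocks are `C¹`-diffeomorphisms of Hilbert space**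
(cf. Lemma B.3 / Remark 3.18 of the paper).  Let `X` be a separable real Hilbert space with
orthonormal basis `(φ_n)`, `δ ∈ (0,1)`, and let `f₁, …, f_T : ℝ^N → ℝ^N` be `C¹` maps such
that each `g_t = D_N ∘ f_t ∘ E_N` is `δ`-Lipschitz.  Then
`G = (Id + g_T) ∘ ⋯ ∘ (Id + g₁)` is a `C¹`-diffeomorphism of `X`, and each factor `Id + g_t`
is strongly monotone with constant `1 − δ` and a `C¹`-diffeomorphism of `X`. -/
theorem residual_network_is_C1_diffeomorphism
    {X : Type*} [NormedAddCommGroup X] [InnerProductSpace ℝ X] [CompleteSpace X]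
    (φ : ℕ → X) (hφ : Orthonormal ℝ φ)
    (hφtotal : (Submodule.span ℝ (Set.range φ)).topologicalClosure = ⊤)
    (δ : ℝ) (hδ : δ ∈ Set.Ioo (0:ℝ) 1)
    (T N : ℕ) (f : ℕ → (Fin N → ℝ) → (Fin N → ℝ))
    (hf : ∀ t < T, ContDiff ℝ 1 (f t))
    (hlip : ∀ t < T, ∀ x y : X,
      ‖synthDN φ N (f t (coordEN φ N x)) - synthDN φ N (f t (coordEN φ N y))‖ ≤ δ * ‖x - y‖) :
    -- the full residual network is a `C¹`-diffeomorphism of `X`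
    (Function.Bijective (compChain (fun t z => z + synthDN φ N (f t (coordEN φ N z))) T) ∧
     ContDiff ℝ 1 (compChain (fun t z => z + synthDN φ N (f t (coordEN φ N z))) T) ∧
     ∃ Ginv : X → X,
       Function.LeftInverse Ginv (compChain (fun t z => z + synthDN φ N (f t (coordEN φ N z))) T) ∧
       Function.RightInverse Ginv (compChain (fun t z => z + synthDN φ N (f t (coordEN φ N z))) T) ∧
       ContDiff ℝ 1 Ginv) ∧
    -- each residual block is strongly monotone with constant `1 − δ` and a `C¹`-diffeomorphism
    (∀ t < T,
      (∀ x y : X, (1 - δ) * ‖x - y‖ ^ 2 ≤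
        ⟪(x + synthDN φ N (f t (coordEN φ N x))) - (y + synthDN φ N (f t (coordEN φ N y))),
          x - y⟫) ∧
      Function.Bijective (fun z : X => z + synthDN φ N (f t (coordEN φ N z))) ∧
      ContDiff ℝ 1 (fun z : X => z + synthDN φ N (f t (coordEN φ N z))) ∧
      ∃ Hinv : X → X,
        Function.LeftInverse Hinv (fun z : X => z + synthDN φ N (f t (coordEN φ N z))) ∧
        Function.RightInverse Hinv (fun z : X => z + synthDN φ N (f t (coordEN φ N z))) ∧
        ContDiff ℝ 1 Hinv) :=
  residual_network_is_C1_diffeomorphism_general φ δ hδ T N f hf hlip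
end
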